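/- The two-frequency received sum power P_s(d) = (P_t/2)(c/2)²[(1/ω₁² + 1/ω₂²)(1/ℓ² + 1/r²) − (2/(ℓr))(cos(ω₁(r−ℓ)/c)/ω₁² + cos(ω₂(r−ℓ)/c)/ω₂²)] is bounded below by P̲_s(d) = (P_t/2)(c/2)²[(1/ω₁² + 1/ω₂²)(1/ℓ² + 1/r²) − (2/(ℓr))√(1/ω₁⁴ + 1/ω₂⁴ + 2cos(Δω(r−ℓ)/c)/(ω₁²ω₂²))] for every d ≥ 0, where Δω = ω₂ − ω₁. -/

import Mathlib

/-!
With `x = 1/ω₁²`, `y = 1/ω₂²` and phases `a = ω₁(r-ℓ)/c`, `b = ω₂(r-ℓ)/c`, the oscillating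
term `x cos a + y cos b` is the real part of `x e^{ia} + y e^{ib}`, hence at most its modulus
`√(x² + y² + 2xy cos(b-a))`, which depends only on the beat phase `b - a = Δω(r-ℓ)/c`.
Since the oscillating term is subtracted in `P_s` with the nonnegative weight
`(P_t/2)(c/2)² · 2/(ℓr)`, replacing it by the modulus gives the lower bound.
-/

open Real

theorem sq_mul_cos_add_sq_mul_sin (x y a b : ℝ) :
    (x * cos a + y * cos b) ^ 2 + (x * sin a + y * sin b) ^ 2 =
      x ^ 2 + y ^ 2 + 2 * x * y * cos (b - a) := by
  rw [cos_sub]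
  linear_combination x ^ 2 * sin_sq_add_cos_sq a + y ^ 2 * sin_sq_add_cos_sq b

theorem mul_cos_add_mul_cos_le_sqrt (x y a b : ℝ) :
    x * cos a + y * cos b ≤ √(x ^ 2 + y ^ 2 + 2 * x * y * cos (b - a)) := by
  rw [← sq_mul_cos_add_sq_mul_sin]
  exact le_sqrt_of_sq_le (le_add_of_nonneg_right (sq_nonneg _))

theorem sum_power_lower_bound_general (ht hr c Pt ω₁ ω₂ : ℝ) (hPt : 0 < Pt) :
    ∀ d ℓ r : ℝ, 0 ≤ d →
      ℓ = Real.sqrt ((ht - hr) ^ 2 + d ^ 2) →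
      r = Real.sqrt ((ht + hr) ^ 2 + d ^ 2) →
      Pt / 2 * (c / 2) ^ 2 *
          ((1 / ω₁ ^ 2 + 1 / ω₂ ^ 2) * (1 / ℓ ^ 2 + 1 / r ^ 2) -
            2 / (ℓ * r) *
              Real.sqrt (1 / ω₁ ^ 4 + 1 / ω₂ ^ 4 +
                2 * Real.cos ((ω₂ - ω₁) * (r - ℓ) / c) / (ω₁ ^ 2 * ω₂ ^ 2)))
        ≤ Pt / 2 * (c / 2) ^ 2 *
          ((1 / ω₁ ^ 2 + 1 / ω₂ ^ 2) * (1 / ℓ ^ 2 + 1 / r ^ 2) -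
            2 / (ℓ * r) *
              (Real.cos (ω₁ * (r - ℓ) / c) / ω₁ ^ 2 +
                Real.cos (ω₂ * (r - ℓ) / c) / ω₂ ^ 2)) := by
  intro d ℓ r _ hℓ hr'
  have hℓ_nonneg : 0 ≤ ℓ := hℓ ▸ sqrt_nonneg _
  have hr_nonneg : 0 ≤ r := hr' ▸ sqrt_nonneg _
  gcongr
  have envelope := mul_cos_add_mul_cos_le_sqrt (1 / ω₁ ^ 2) (1 / ω₂ ^ 2)
    (ω₁ * (r - ℓ) / c) (ω₂ * (r - ℓ) / c)
  rw [← sub_div, ← sub_mul] at envelope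
  calc _ = _ := by ring
    _ ≤ _ := envelope
    _ = _ := by ring_nf

/-- The two-frequency received sum power is bounded below by the envelope lower bound
P̲_s for every distance d ≥ 0. -/
theorem sum_power_lower_bound (ht hr c Pt ω₁ ω₂ : ℝ) (hht : 0 < ht) (hhr : 0 < hr)
    (hc : 0 < c) (hPt : 0 < Pt) (hω₁ : 0 < ω₁) (hω₂ : 0 < ω₂) :
    ∀ d ℓ r : ℝ, 0 ≤ d →
      ℓ = Real.sqrt ((ht - hr) ^ 2 + d ^ 2) →
      r = Real.sqrt ((ht + hr) ^ 2 + d ^ 2) →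
      Pt / 2 * (c / 2) ^ 2 *
          ((1 / ω₁ ^ 2 + 1 / ω₂ ^ 2) * (1 / ℓ ^ 2 + 1 / r ^ 2) -
            2 / (ℓ * r) *
              Real.sqrt (1 / ω₁ ^ 4 + 1 / ω₂ ^ 4 +
                2 * Real.cos ((ω₂ - ω₁) * (r - ℓ) / c) / (ω₁ ^ 2 * ω₂ ^ 2)))
        ≤ Pt / 2 * (c / 2) ^ 2 *
          ((1 / ω₁ ^ 2 + 1 / ω₂ ^ 2) * (1 / ℓ ^ 2 + 1 / r ^ 2) -
            2 / (ℓ * r) *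
              (Real.cos (ω₁ * (r - ℓ) / c) / ω₁ ^ 2 +
                Real.cos (ω₂ * (r - ℓ) / c) / ω₂ ^ 2)) :=
  sum_power_lower_bound_general ht hr c Pt ω₁ ω₂ hPt
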